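/- arXiv:0711.3727 — 4 statements merged into one kernel-verified Lean document; each statement's English description precedes it below -/
import Mathlib

section
/- If T is an invertible r×r complex matrix whose Aluthge transform satisfies Δ(T) = T, then T is normal. -/
open Matrix
open scoped ComplexOrder

/-- If an invertible matrix is a fixed point of its Aluthge transform then it is
normal. -/
theorem normal_of_aluthge_fixed {r : ℕ}
    (T U P R : Matrix (Fin r) (Fin r) ℂ)
    (hU : U ∈ Matrix.unitaryGroup (Fin r) ℂ) (hP : P.PosDef)
    (hPP : P * P = Tᴴ * T) (hT : T = U * P)
    (hR : R.PosDef) (hRR : R * R = P)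
    (hfix : R * U * R = T) :
    Tᴴ * T = T * Tᴴ := by
  have hRu : IsUnit R := hR.isUnit
  have hdet : IsUnit R.det := (Matrix.isUnit_iff_isUnit_det R).mp hRu
  have hRi2 : R * R⁻¹ = 1 := Matrix.mul_nonsing_inv R hdet
  -- R * U * R = U * R * R, cancel R on the right
  have h1 : R * U * R = U * R * R := by
    rw [hfix, hT, ← hRR, mul_assoc]
  have hcomm : R * U = U * R := by
    have := congrArg (· * R⁻¹) h1
    simpa [mul_assoc, hRi2] using this
  have hcommP : U * P = P * U := by
    rw [← hRR, ← mul_assoc, ← hcomm, mul_assoc, ← hcomm, ← mul_assoc]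
  have hcommP2 : U * (P * P) = P * P * U := by
    rw [← mul_assoc, hcommP, mul_assoc, hcommP, ← mul_assoc]
  have hUU' : U * Uᴴ = 1 := mem_unitaryGroup_iff.mp hU
  have hPH : Pᴴ = P := hP.isHermitian
  have key : T * Tᴴ = P * P := by
    rw [hT, conjTranspose_mul, hPH]
    calc U * P * (P * Uᴴ) = U * (P * P) * Uᴴ := by simp [mul_assoc]
      _ = P * P * (U * Uᴴ) := by rw [hcommP2, mul_assoc]
      _ = P * P := by rw [hUU', mul_one]
  rw [← hPP, key]
end

section
/- For every invertible r×r complex matrix T, the Frobenius norm of the Aluthge transform satisfies ‖Δ(T)‖₂ ≤ ‖T‖₂. -/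
open Matrix
open scoped ComplexOrder

/-- The Frobenius norm of the Aluthge transform is at most the Frobenius norm
of the matrix: `‖Δ(T)‖₂ ≤ ‖T‖₂`. -/
theorem aluthge_frobenius_le {r : ℕ}
    (T U P R : Matrix (Fin r) (Fin r) ℂ)
    (hU : U ∈ Matrix.unitaryGroup (Fin r) ℂ) (hP : P.PosDef)
    (hPP : P * P = Tᴴ * T) (hT : T = U * P)
    (hR : R.PosDef) (hRR : R * R = P) :
    Real.sqrt ((((R * U * R)ᴴ * (R * U * R)).trace).re)
      ≤ Real.sqrt (((Tᴴ * T).trace).re) := by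
  apply Real.sqrt_le_sqrt
  have hRh : Rᴴ = R := hR.isHermitian
  have hU1 : Uᴴ * U = 1 := by
    have := (Matrix.mem_unitaryGroup_iff'.mp hU)
    simpa [Matrix.star_eq_conjTranspose] using this
  have hU2 : U * Uᴴ = 1 := by
    have := (Matrix.mem_unitaryGroup_iff.mp hU)
    simpa [Matrix.star_eq_conjTranspose] using this
  set X := R * R with hX
  set Y := U * X * Uᴴ with hY
  -- nonnegativity of trace(DᴴD)
  have key : ∀ A : Matrix (Fin r) (Fin r) ℂ, 0 ≤ ((Aᴴ * A).trace).re := by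
    intro A
    have h : ((Aᴴ * A).trace).re = ∑ i, ∑ j, Complex.normSq (A j i) := by
      simp [Matrix.trace, Matrix.mul_apply, Matrix.conjTranspose_apply,
        Complex.re_sum, ← Complex.normSq_eq_conj_mul_self]
    rw [h]
    exact Finset.sum_nonneg fun i _ => Finset.sum_nonneg fun j _ => Complex.normSq_nonneg _
  have hYh : Yᴴ = Y := by
    simp [hY, Matrix.conjTranspose_mul, Matrix.mul_assoc, hR.isHermitian.eq,
      Matrix.conjTranspose_mul, hX]
  have hXh : Xᴴ = X := by simp [hX, Matrix.conjTranspose_mul, hRh]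
  have hYY : (Y * Y).trace = (X * X).trace := by
    have : Y * Y = U * (X * X) * Uᴴ := by
      simp only [hY, Matrix.mul_assoc]
      rw [← Matrix.mul_assoc Uᴴ U, hU1, Matrix.one_mul]
    rw [this, Matrix.trace_mul_cycle, ← Matrix.mul_assoc, hU1, Matrix.one_mul]
  have hD := key (X - Y)
  have hexp : ((X - Y)ᴴ * (X - Y)).trace
      = (X * X).trace - (X * Y).trace - (Y * X).trace + (Y * Y).trace := by
    rw [Matrix.conjTranspose_sub, hXh, hYh]
    simp [Matrix.sub_mul, Matrix.mul_sub, Matrix.trace_sub, Matrix.trace_add]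
    ring
  have hYX : (Y * X).trace = (X * Y).trace := Matrix.trace_mul_comm Y X
  have hmain : ((X * Y).trace).re ≤ ((X * X).trace).re := by
    rw [hexp, hYX, hYY] at hD
    simp only [Complex.sub_re, Complex.add_re] at hD
    linarith
  -- identify the two traces
  have hL : ((R * U * R)ᴴ * (R * U * R)).trace = (X * Y).trace := by
    have : (R * U * R)ᴴ * (R * U * R) = (R * Uᴴ) * (X * (U * R)) := by
      simp [Matrix.conjTranspose_mul, hRh, Matrix.mul_assoc, hX]
    rw [this, Matrix.trace_mul_comm]
    congr 1
    simp [hY, hX, Matrix.mul_assoc]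
  have hRt : (Tᴴ * T).trace = (X * X).trace := by
    rw [← hPP, ← hRR]
  rw [hL, hRt]
  exact hmain
end

section
/- If T is an invertible r×r complex matrix and ‖Δ(T)‖₂ = ‖T‖₂ (Frobenius norm), then T is normal. -/
open Matrix
open scoped ComplexOrder

lemma trace_re_aux {r : ℕ} (M : Matrix (Fin r) (Fin r) ℂ) :
    ((Mᴴ * M).trace).re = ∑ j, ∑ i, Complex.normSq (M i j) := by
  simp [Matrix.trace, Matrix.diag, Matrix.mul_apply, Matrix.conjTranspose_apply,
    Complex.re_sum, ← Complex.normSq_eq_conj_mul_self]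

/-- If the Frobenius norm of the Aluthge transform of an invertible matrix `T`
equals the Frobenius norm of `T`, then `T` is normal. -/
theorem normal_of_aluthge_frobenius_eq {r : ℕ}
    (T U P R : Matrix (Fin r) (Fin r) ℂ)
    (hU : U ∈ Matrix.unitaryGroup (Fin r) ℂ) (hP : P.PosDef)
    (hPP : P * P = Tᴴ * T) (hT : T = U * P)
    (hR : R.PosDef) (hRR : R * R = P)
    (hnorm : Real.sqrt ((((R * U * R)ᴴ * (R * U * R)).trace).re)
      = Real.sqrt (((Tᴴ * T).trace).re)) :
    Tᴴ * T = T * Tᴴ := by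
  have hRH : Rᴴ = R := hR.1
  have hPH : Pᴴ = P := hP.1
  have hUH1 : Uᴴ * U = 1 := by simpa [Matrix.star_eq_conjTranspose] using hU.1
  have hU1 : U * Uᴴ = 1 := by simpa [Matrix.star_eq_conjTranspose] using hU.2
  set A := R * R with hAdef
  set B := Uᴴ * A * U with hBdef
  have hAH : Aᴴ = A := by rw [hAdef, Matrix.conjTranspose_mul, hRH]
  -- trace identities
  have h1 : ((R * U * R)ᴴ * (R * U * R)).trace = (B * A).trace := by
    have e : (R * U * R)ᴴ * (R * U * R) = R * (Uᴴ * (R * (R * (U * R)))) := by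
      simp [Matrix.conjTranspose_mul, hRH, Matrix.mul_assoc]
    rw [e, Matrix.trace_mul_comm]
    congr 1
    simp [hBdef, hAdef, Matrix.mul_assoc]
  have h2 : (Tᴴ * T).trace = (A * A).trace := by
    rw [← hPP, hRR]
  have h3 : (B * B).trace = (A * A).trace := by
    have e : B * B = Uᴴ * (A * (A * U)) := by
      have : ∀ X : Matrix (Fin r) (Fin r) ℂ, U * (Uᴴ * X) = X := fun X => by
        rw [← Matrix.mul_assoc, hU1, Matrix.one_mul]
      simp [hBdef, Matrix.mul_assoc, this]
    rw [e, Matrix.trace_mul_comm]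
    simp [Matrix.mul_assoc, hU1]
  -- from hnorm
  have n1 : 0 ≤ (((R * U * R)ᴴ * (R * U * R)).trace).re := by
    rw [trace_re_aux]
    exact Finset.sum_nonneg fun _ _ => Finset.sum_nonneg fun _ _ => Complex.normSq_nonneg _
  have n2 : 0 ≤ ((Tᴴ * T).trace).re := by
    rw [trace_re_aux]
    exact Finset.sum_nonneg fun _ _ => Finset.sum_nonneg fun _ _ => Complex.normSq_nonneg _
  have key : (((R * U * R)ᴴ * (R * U * R)).trace).re = ((Tᴴ * T).trace).re := by
    rw [← Real.sq_sqrt n1, ← Real.sq_sqrt n2, hnorm]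
  -- M := A - B vanishes
  have hMH : (A - B)ᴴ = A - B := by
    rw [Matrix.conjTranspose_sub, hAH, hBdef]
    simp [Matrix.conjTranspose_mul, hAH, Matrix.mul_assoc]
  have htrM : (((A - B)ᴴ * (A - B)).trace).re = 0 := by
    rw [hMH]
    have e : (A - B) * (A - B) = A * A - A * B - B * A + B * B := by
      noncomm_ring
    rw [e, Matrix.trace_add, Matrix.trace_sub, Matrix.trace_sub,
      Matrix.trace_mul_comm A B]
    have := key
    rw [h1, h2] at this
    have h3' := h3
    simp only [Complex.add_re, Complex.sub_re]
    linarith [congrArg Complex.re h3']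
  have hM0 : A - B = 0 := by
    rw [trace_re_aux] at htrM
    ext i j
    have hz : Complex.normSq ((A - B) i j) = 0 := by
      have hnn : ∀ j ∈ Finset.univ, (0:ℝ) ≤ ∑ i, Complex.normSq ((A - B) i j) := by
        intro j _
        exact Finset.sum_nonneg fun _ _ => Complex.normSq_nonneg _
      have h4 := (Finset.sum_eq_zero_iff_of_nonneg hnn).mp htrM j (Finset.mem_univ j)
      have hnn2 : ∀ i ∈ Finset.univ, (0:ℝ) ≤ Complex.normSq ((A - B) i j) := by
        intro i _; exact Complex.normSq_nonneg _
      exact (Finset.sum_eq_zero_iff_of_nonneg hnn2).mp h4 i (Finset.mem_univ i)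
    simpa using Complex.normSq_eq_zero.mp hz
  have hAB : A = B := by linear_combination (norm := noncomm_ring) hM0
  -- U commutes with P
  have hcomm : U * P = P * U := by
    have : U * A = A * U := by
      conv_lhs => rw [hAB, hBdef]
      rw [← Matrix.mul_assoc, ← Matrix.mul_assoc, hU1, Matrix.one_mul]
    rwa [hRR] at this
  -- finish
  have hct : (U * P)ᴴ = P * Uᴴ := by rw [Matrix.conjTranspose_mul, hPH]
  have hcomm2 : U * (P * P) = (P * P) * U := by
    rw [← Matrix.mul_assoc, hcomm, Matrix.mul_assoc, hcomm, ← Matrix.mul_assoc]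
  have l : P * Uᴴ * (U * P) = P * P := by
    rw [Matrix.mul_assoc, ← Matrix.mul_assoc Uᴴ U P, hUH1, Matrix.one_mul]
  have rr : U * P * (P * Uᴴ) = P * P := by
    have e : U * P * (P * Uᴴ) = U * (P * P) * Uᴴ := by simp [Matrix.mul_assoc]
    rw [e, hcomm2, Matrix.mul_assoc, hU1, Matrix.mul_one]
  rw [hT, hct, l, rr]
end

section
/- Let T be an invertible r×r complex matrix such that the iterated Aluthge transforms Δⁿ(T) converge to some matrix L. Then L is normal and has the same characteristic polynomial as T. -/
open Matrix Filter Topology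
open scoped ComplexOrder

namespace Matrix.PosSemidef

variable {n 𝕜 : Type*} [Fintype n] [DecidableEq n] [RCLike 𝕜] {A : Matrix n n 𝕜}

/-- The positive semidefinite square root of a positive semidefinite matrix -/
noncomputable def sqrt (hA : A.PosSemidef) : Matrix n n 𝕜 :=
  hA.1.eigenvectorUnitary.1 * diagonal ((↑) ∘ (√·) ∘ hA.1.eigenvalues) *
  (star hA.1.eigenvectorUnitary : Matrix n n 𝕜)

lemma posSemidef_sqrt (hA : A.PosSemidef) : PosSemidef hA.sqrt := by
  apply PosSemidef.mul_mul_conjTranspose_same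
  refine posSemidef_diagonal_iff.mpr fun i ↦ ?_
  rw [Function.comp_apply, RCLike.nonneg_iff]
  constructor
  · simp only [Function.comp_apply, RCLike.ofReal_re]
    exact Real.sqrt_nonneg _
  · simp only [Function.comp_apply, RCLike.ofReal_im]

end Matrix.PosSemidef

/-- `|T| = (T*T)^{1/2}`, the positive semidefinite square root of `Tᴴ * T`. -/
noncomputable def matAbs {r : ℕ} (T : Matrix (Fin r) (Fin r) ℂ) :
    Matrix (Fin r) (Fin r) ℂ :=
  (Matrix.posSemidef_conjTranspose_mul_self T).sqrt

/-- `|T|^{1/2}`, the positive semidefinite square root of `|T|`. -/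
noncomputable def matAbsSqrt {r : ℕ} (T : Matrix (Fin r) (Fin r) ℂ) :
    Matrix (Fin r) (Fin r) ℂ :=
  (Matrix.posSemidef_conjTranspose_mul_self T).posSemidef_sqrt.sqrt

/-- The Aluthge transform `Δ(T) = |T|^{1/2} U |T|^{1/2}`, where for invertible `T`
the unitary factor of the polar decomposition `T = U|T|` is `U = T|T|⁻¹`. -/
noncomputable def aluthge {r : ℕ} (T : Matrix (Fin r) (Fin r) ℂ) :
    Matrix (Fin r) (Fin r) ℂ :=
  matAbsSqrt T * (T * (matAbs T)⁻¹) * matAbsSqrt T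

/-!
Write `S = U A` with `A = |S|` and `U` unitary, and put `C = A U - U A`. For invertible `S` the
Aluthge transform is the similarity `Δ S = |S|^{1/2} S |S|^{-1/2}`, so every `Δⁿ T` is invertible
with the characteristic polynomial of `T`, and this passes to the limit since `N ↦ det (t - N)` is
continuous. In the Frobenius norm, a trace computation gives `‖C‖² = 2‖S‖² - 2‖Δ S‖²`, and
`SᴴS - SSᴴ = (AC + CA)Uᴴ` gives `‖SᴴS - SSᴴ‖ ≤ 2‖S‖‖C‖`. Along a convergent orbit `‖Δⁿ T‖`
converges, so `C → 0` and the normality defect of `Δⁿ T` tends to `0`.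
-/

namespace Matrix.PosSemidef

variable {n 𝕜 : Type*} [Fintype n] [DecidableEq n] [RCLike 𝕜] {A : Matrix n n 𝕜}

theorem sqrt_mul_self (hA : A.PosSemidef) : hA.sqrt * hA.sqrt = A := by
  set U : Matrix n n 𝕜 := hA.1.eigenvectorUnitary.1
  set D : Matrix n n 𝕜 := diagonal ((↑) ∘ (√·) ∘ hA.1.eigenvalues)
  have hU : star U * U = 1 := Unitary.star_mul_self_of_mem hA.1.eigenvectorUnitary.2
  have hD : D * D = diagonal (RCLike.ofReal ∘ hA.1.eigenvalues) := by
    rw [diagonal_mul_diagonal]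
    congr 1
    funext i
    simp only [Function.comp_apply, ← RCLike.ofReal_mul,
      Real.mul_self_sqrt (hA.eigenvalues_nonneg i)]
  conv_rhs => rw [hA.1.spectral_theorem, Unitary.conjStarAlgAut_apply, ← hD]
  calc hA.sqrt * hA.sqrt = U * (D * (star U * U) * D) * star U := by
        simp only [sqrt, U, D, Matrix.mul_assoc]
    _ = U * (D * D) * star U := by rw [hU, Matrix.mul_one]

end Matrix.PosSemidef

namespace Matrix

variable {n R : Type*} [Fintype n] [CommRing R] [StarRing R] {A B U : Matrix n n R}

theorem trace_conjTranspose_mul_self_commutator [DecidableEq n] (hA : Aᴴ = A) (hU : Uᴴ * U = 1) :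
    trace ((A * U - U * A)ᴴ * (A * U - U * A)) =
      2 * trace (A * A) - 2 * trace (Uᴴ * A * U * A) := by
  have hU' : U * Uᴴ = 1 := mul_eq_one_comm.mp hU
  have h1 : trace (Uᴴ * A * (A * U)) = trace (A * A) :=
    calc trace (Uᴴ * A * (A * U)) = trace (A * U * (Uᴴ * A)) := trace_mul_comm _ _
      _ = trace (A * (U * Uᴴ) * A) := by simp only [Matrix.mul_assoc]
      _ = trace (A * A) := by rw [hU', Matrix.mul_one]
  have h2 : trace (A * Uᴴ * (U * A)) = trace (A * A) := by
    rw [Matrix.mul_assoc, ← Matrix.mul_assoc Uᴴ, hU, Matrix.one_mul]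
  have h3 : trace (A * Uᴴ * (A * U)) = trace (Uᴴ * A * U * A) :=
    calc trace (A * Uᴴ * (A * U)) = trace (A * (Uᴴ * A * U)) := by simp only [Matrix.mul_assoc]
      _ = trace (Uᴴ * A * U * A) := trace_mul_comm _ _
  simp only [conjTranspose_sub, conjTranspose_mul, hA, Matrix.sub_mul, Matrix.mul_sub, trace_sub,
    h1, h2, h3]
  simp only [Matrix.mul_assoc]
  ring

theorem trace_conjTranspose_mul_self_sandwich (hB : Bᴴ = B) :
    trace ((B * U * B)ᴴ * (B * U * B)) = trace (Uᴴ * (B * B) * U * (B * B)) := by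
  simp only [conjTranspose_mul, hB, Matrix.mul_assoc]
  rw [← trace_mul_comm]
  simp only [Matrix.mul_assoc]

theorem conjTranspose_mul_self_sub_mul_conjTranspose_self [DecidableEq n] (hA : Aᴴ = A)
    (hU : Uᴴ * U = 1) :
    (U * A)ᴴ * (U * A) - U * A * (U * A)ᴴ =
      (A * (A * U - U * A) + (A * U - U * A) * A) * Uᴴ := by
  have hU' : U * Uᴴ = 1 := mul_eq_one_comm.mp hU
  simp only [conjTranspose_mul, hA, Matrix.mul_sub, Matrix.sub_mul, Matrix.add_mul,
    Matrix.mul_assoc]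
  rw [← Matrix.mul_assoc Uᴴ, hU, hU', Matrix.one_mul, Matrix.mul_one]
  abel

end Matrix

theorem Matrix.charpoly_eq_of_tendsto {n R ι : Type*} [Fintype n] [DecidableEq n] [CommRing R]
    [IsDomain R] [Infinite R] [TopologicalSpace R] [IsTopologicalRing R] [T2Space R]
    {l : Filter ι} [l.NeBot] {M : ι → Matrix n n R} {L : Matrix n n R} {p : Polynomial R}
    (hM : Tendsto M l (𝓝 L)) (h : ∀ i, (M i).charpoly = p) : L.charpoly = p := by
  refine Polynomial.funext fun t => ?_
  have hcont : Continuous fun N : Matrix n n R => (scalar n t - N).det :=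
    (continuous_const.sub continuous_id).matrix_det
  rw [eval_charpoly]
  exact (isClosed_eq hcont continuous_const).mem_of_tendsto hM
    (Eventually.of_forall fun i => by rw [Set.mem_ofPred_eq, ← eval_charpoly, h])

section PolarDecomposition

variable {r : ℕ} {S : Matrix (Fin r) (Fin r) ℂ}

noncomputable def polarUnitary (S : Matrix (Fin r) (Fin r) ℂ) : Matrix (Fin r) (Fin r) ℂ :=
  S * (matAbs S)⁻¹

theorem aluthge_eq_matAbsSqrt_mul_polarUnitary (S : Matrix (Fin r) (Fin r) ℂ) :
    aluthge S = matAbsSqrt S * polarUnitary S * matAbsSqrt S :=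
  rfl

theorem conjTranspose_matAbs (S : Matrix (Fin r) (Fin r) ℂ) : (matAbs S)ᴴ = matAbs S :=
  (posSemidef_conjTranspose_mul_self S).posSemidef_sqrt.1.eq

theorem matAbs_mul_self (S : Matrix (Fin r) (Fin r) ℂ) : matAbs S * matAbs S = Sᴴ * S :=
  (posSemidef_conjTranspose_mul_self S).sqrt_mul_self

theorem conjTranspose_matAbsSqrt (S : Matrix (Fin r) (Fin r) ℂ) :
    (matAbsSqrt S)ᴴ = matAbsSqrt S :=
  (posSemidef_conjTranspose_mul_self S).posSemidef_sqrt.posSemidef_sqrt.1.eq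

theorem matAbsSqrt_mul_self (S : Matrix (Fin r) (Fin r) ℂ) :
    matAbsSqrt S * matAbsSqrt S = matAbs S :=
  (posSemidef_conjTranspose_mul_self S).posSemidef_sqrt.sqrt_mul_self

theorem isUnit_matAbs (hS : IsUnit S) : IsUnit (matAbs S) :=
  isUnit_of_mul_isUnit_left (x := matAbs S) (by rw [matAbs_mul_self]; exact hS.star.mul hS)

theorem isUnit_matAbsSqrt (hS : IsUnit S) : IsUnit (matAbsSqrt S) :=
  isUnit_of_mul_isUnit_left (x := matAbsSqrt S)
    (by rw [matAbsSqrt_mul_self]; exact isUnit_matAbs hS)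

theorem polarUnitary_mul_matAbs (hS : IsUnit S) : polarUnitary S * matAbs S = S :=
  nonsing_inv_mul_cancel_right _ _ ((isUnit_matAbs hS).map detMonoidHom)

theorem conjTranspose_polarUnitary_mul_self (hS : IsUnit S) :
    (polarUnitary S)ᴴ * polarUnitary S = 1 := by
  have hA := (isUnit_matAbs hS).map detMonoidHom
  rw [polarUnitary, conjTranspose_mul, conjTranspose_nonsing_inv, conjTranspose_matAbs,
    Matrix.mul_assoc, ← Matrix.mul_assoc Sᴴ, ← matAbs_mul_self, ← Matrix.mul_assoc,
    ← Matrix.mul_assoc, nonsing_inv_mul _ hA, Matrix.one_mul, mul_nonsing_inv _ hA]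

theorem aluthge_eq_conj (hS : IsUnit S) :
    aluthge S = matAbsSqrt S * S * (matAbsSqrt S)⁻¹ := by
  rw [aluthge, ← matAbsSqrt_mul_self, Matrix.mul_inv_rev]
  simp only [Matrix.mul_assoc]
  rw [nonsing_inv_mul _ ((isUnit_matAbsSqrt hS).map detMonoidHom), Matrix.mul_one]

theorem charpoly_aluthge (hS : IsUnit S) : (aluthge S).charpoly = S.charpoly := by
  obtain ⟨B, hB⟩ := isUnit_matAbsSqrt hS
  rw [aluthge_eq_conj hS, ← hB, charpoly_units_conj]

theorem isUnit_aluthge (hS : IsUnit S) : IsUnit (aluthge S) := by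
  rw [aluthge_eq_conj hS]
  exact ((isUnit_matAbsSqrt hS).mul hS).mul (isUnit_nonsing_inv_iff.mpr (isUnit_matAbsSqrt hS))

variable {T : Matrix (Fin r) (Fin r) ℂ}

theorem isUnit_iterate_aluthge (hT : IsUnit T) (n : ℕ) : IsUnit (aluthge^[n] T) := by
  induction n with
  | zero => exact hT
  | succ n ih => rw [Function.iterate_succ_apply']; exact isUnit_aluthge ih

theorem charpoly_iterate_aluthge (hT : IsUnit T) (n : ℕ) :
    (aluthge^[n] T).charpoly = T.charpoly := by
  induction n with
  | zero => rfl
  | succ n ih =>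
    rw [Function.iterate_succ_apply', charpoly_aluthge (isUnit_iterate_aluthge hT n), ih]

end PolarDecomposition

section Frobenius

attribute [local instance] Matrix.frobeniusNormedAddCommGroup

variable {m n 𝕜 : Type*} [Fintype m] [Fintype n] [RCLike 𝕜]

theorem Matrix.frobenius_norm_sq_eq_trace (A : Matrix m n 𝕜) :
    (‖A‖ : 𝕜) ^ 2 = trace (Aᴴ * A) := by
  rw [← RCLike.ofReal_pow, frobenius_norm_def, ← Real.sqrt_eq_rpow,
    Real.sq_sqrt (by positivity), Finset.sum_comm]
  simp [trace, mul_apply, RCLike.conj_mul]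

theorem Matrix.frobenius_norm_eq_of_trace_eq {A B : Matrix m n 𝕜}
    (h : trace (Aᴴ * A) = trace (Bᴴ * B)) : ‖A‖ = ‖B‖ := by
  rw [← frobenius_norm_sq_eq_trace, ← frobenius_norm_sq_eq_trace] at h
  exact (pow_left_inj₀ (norm_nonneg A) (norm_nonneg B) two_ne_zero).mp (by exact_mod_cast h)

theorem Matrix.frobenius_norm_mul_conjTranspose_of_conjTranspose_mul_self_eq_one [DecidableEq n]
    (X : Matrix m n 𝕜) {U : Matrix n n 𝕜} (hU : Uᴴ * U = 1) : ‖X * Uᴴ‖ = ‖X‖ := by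
  refine frobenius_norm_eq_of_trace_eq ?_
  rw [conjTranspose_mul, conjTranspose_conjTranspose, Matrix.mul_assoc, trace_mul_comm]
  simp only [Matrix.mul_assoc, hU, Matrix.mul_one]

variable {r : ℕ} {S : Matrix (Fin r) (Fin r) ℂ}

theorem norm_matAbs (S : Matrix (Fin r) (Fin r) ℂ) : ‖matAbs S‖ = ‖S‖ :=
  frobenius_norm_eq_of_trace_eq (by rw [conjTranspose_matAbs, matAbs_mul_self])

theorem norm_sq_commutator_matAbs_polarUnitary (hS : IsUnit S) :
    ‖matAbs S * polarUnitary S - polarUnitary S * matAbs S‖ ^ 2 =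
      2 * ‖S‖ ^ 2 - 2 * ‖aluthge S‖ ^ 2 := by
  apply RCLike.ofReal_injective (K := ℂ)
  simp only [RCLike.ofReal_sub, RCLike.ofReal_mul, RCLike.ofReal_pow, RCLike.ofReal_ofNat]
  rw [frobenius_norm_sq_eq_trace, frobenius_norm_sq_eq_trace, frobenius_norm_sq_eq_trace,
    trace_conjTranspose_mul_self_commutator (conjTranspose_matAbs S)
      (conjTranspose_polarUnitary_mul_self hS),
    aluthge_eq_matAbsSqrt_mul_polarUnitary,
    trace_conjTranspose_mul_self_sandwich (conjTranspose_matAbsSqrt S), matAbsSqrt_mul_self,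
    matAbs_mul_self]

theorem norm_conjTranspose_mul_self_sub_le (hS : IsUnit S) :
    ‖Sᴴ * S - S * Sᴴ‖ ≤
      2 * ‖S‖ * ‖matAbs S * polarUnitary S - polarUnitary S * matAbs S‖ := by
  set C := matAbs S * polarUnitary S - polarUnitary S * matAbs S
  have hU := conjTranspose_polarUnitary_mul_self hS
  calc ‖Sᴴ * S - S * Sᴴ‖ = ‖(matAbs S * C + C * matAbs S) * (polarUnitary S)ᴴ‖ := by
        conv_lhs => rw [← polarUnitary_mul_matAbs hS]
        rw [conjTranspose_mul_self_sub_mul_conjTranspose_self (conjTranspose_matAbs S) hU]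
    _ = ‖matAbs S * C + C * matAbs S‖ :=
        frobenius_norm_mul_conjTranspose_of_conjTranspose_mul_self_eq_one _ hU
    _ ≤ ‖matAbs S‖ * ‖C‖ + ‖C‖ * ‖matAbs S‖ :=
        (norm_add_le _ _).trans (add_le_add (frobenius_norm_mul _ _) (frobenius_norm_mul _ _))
    _ = 2 * ‖S‖ * ‖C‖ := by rw [norm_matAbs]; ring

theorem isStarNormal_of_tendsto_iterate_aluthge {T L : Matrix (Fin r) (Fin r) ℂ} (hT : IsUnit T)
    (hlim : Tendsto (fun n => aluthge^[n] T) atTop (𝓝 L)) : IsStarNormal L := by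
  set S := fun n => aluthge^[n] T
  set C := fun n => matAbs (S n) * polarUnitary (S n) - polarUnitary (S n) * matAbs (S n)
  have hnorm : Tendsto (fun n => ‖S n‖) atTop (𝓝 ‖L‖) := hlim.norm
  have hC : Tendsto (fun n => ‖C n‖) atTop (𝓝 0) := by
    have hC_eq : ∀ n, ‖C n‖ = √(2 * ‖S n‖ ^ 2 - 2 * ‖S (n + 1)‖ ^ 2) := fun n => by
      rw [show S (n + 1) = aluthge (S n) from Function.iterate_succ_apply' _ _ _,
        ← norm_sq_commutator_matAbs_polarUnitary (isUnit_iterate_aluthge hT n),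
        Real.sqrt_sq (norm_nonneg _)]
    have hroot := (((hnorm.pow 2).const_mul 2).sub
      (((hnorm.comp (tendsto_add_atTop_nat 1)).pow 2).const_mul 2)).sqrt
    rw [sub_self, Real.sqrt_zero] at hroot
    exact hroot.congr fun n => (hC_eq n).symm
  have hdefect : Tendsto (fun n => (S n)ᴴ * S n - S n * (S n)ᴴ) atTop (𝓝 0) := by
    refine squeeze_zero_norm (fun n => norm_conjTranspose_mul_self_sub_le
      (isUnit_iterate_aluthge hT n)) ?_
    simpa using (hnorm.const_mul 2).mul hC
  have hdefect' : Tendsto (fun n => (S n)ᴴ * S n - S n * (S n)ᴴ) atTop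
      (𝓝 (Lᴴ * L - L * Lᴴ)) :=
    (hlim.star.mul hlim).sub (hlim.mul hlim.star)
  exact ⟨sub_eq_zero.mp (tendsto_nhds_unique hdefect' hdefect)⟩

end Frobenius

/-- If the iterated Aluthge transforms of an invertible matrix `T` converge to
`L`, then `L` is normal and has the same characteristic polynomial as `T`. -/
theorem aluthge_limit_normal_same_charpoly {r : ℕ}
    (T L : Matrix (Fin r) (Fin r) ℂ) (hT : IsUnit T)
    (hlim : Filter.Tendsto (fun n => aluthge^[n] T) atTop (𝓝 L)) :
    Lᴴ * L = L * Lᴴ ∧ L.charpoly = T.charpoly :=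
  ⟨(isStarNormal_of_tendsto_iterate_aluthge hT hlim).star_comm_self.eq,
    charpoly_eq_of_tendsto hlim (charpoly_iterate_aluthge hT)⟩
end
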